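/- arXiv:1707.00481 — 3 statements merged into one kernel-verified Lean document; each statement's English description precedes it below -/
import Mathlib

section
/- Let A ∈ ℤ^{m×n}, b ∈ ℤ^m, c ∈ ℤ^n, u ∈ ℤ^n_{≥0}, and let P = {x ∈ ℝ^n : Ax = b, 0 ≤ x ≤ u}. Let x* ∈ P satisfy c^T x* ≥ c^T x for all x ∈ P, let z ∈ P ∩ ℤ^n, and let y ∈ ℤ^n be a cycle of z − x*. Then c^T y ≤ 0. -/
/-!
Sign-compatibility of `y` with `z - x*` puts every coordinate of `x* + y` between the
corresponding coordinates of `x*` and `z`, so `x* + y` stays in the box; since `Ay = 0` it also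
satisfies `Ax = b`. Hence `x* + y ∈ P`, and optimality of `x*` gives `cᵀ(x* + y) ≤ cᵀx*`.
-/

open Matrix

theorem add_mem_uIcc_of_abs_le_of_mul_nonneg {α : Type*} [CommRing α] [LinearOrder α]
    [IsStrictOrderedRing α] {x y z : α} (habs : |y| ≤ |z - x|) (hsign : 0 ≤ y * (z - x)) :
    x + y ∈ Set.uIcc x z := by
  rcases le_total 0 y with hy | hy <;> rcases le_total 0 (z - x) with hd | hd
  · rw [abs_of_nonneg hy, abs_of_nonneg hd] at habs
    exact Set.mem_uIcc.mpr (.inl ⟨by linarith, by linarith⟩)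
  · rw [abs_of_nonneg hy, abs_of_nonpos hd] at habs
    have : y = 0 := by nlinarith
    simp [this]
  · rw [abs_of_nonpos hy, abs_of_nonneg hd] at habs
    have : y = 0 := by nlinarith
    simp [this]
  · rw [abs_of_nonpos hy, abs_of_nonpos hd] at habs
    exact Set.mem_uIcc.mpr (.inr ⟨by linarith, by linarith⟩)

theorem Matrix.map_intCast_mulVec_eq_zero {m n : Type*} [Fintype n] {R : Type*} [Ring R]
    {A : Matrix m n ℤ} {y : n → ℤ} (hAy : A *ᵥ y = 0) :
    A.map (Int.cast : ℤ → R) *ᵥ (fun i => (y i : R)) = 0 := by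
  ext i
  simpa [hAy, Function.comp_def] using (RingHom.map_mulVec (Int.castRingHom R) A y i).symm

theorem cycle_has_nonpositive_weight_general
    (m n : ℕ)
    (A : Matrix (Fin m) (Fin n) ℤ) (b : Fin m → ℤ) (c : Fin n → ℤ)
    (u : Fin n → ℤ)
    (P : Set (Fin n → ℝ))
    (hP : P = {x : Fin n → ℝ |
      (Matrix.mulVec (fun i j => (A i j : ℝ)) x = fun i => (b i : ℝ)) ∧
      ∀ i, 0 ≤ x i ∧ x i ≤ (u i : ℝ)})
    (xstar : Fin n → ℝ) (hxP : xstar ∈ P)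
    (hx_opt : ∀ x ∈ P, ∑ i, (c i : ℝ) * x i ≤ ∑ i, (c i : ℝ) * xstar i)
    (z : Fin n → ℤ) (hzP : (fun i => (z i : ℝ)) ∈ P)
    (y : Fin n → ℤ)
    (hAy : A.mulVec y = 0)
    (hy1 : ∀ i, |(y i : ℝ)| ≤ |(z i : ℝ) - xstar i|)
    (hy2 : ∀ i, 0 ≤ (y i : ℝ) * ((z i : ℝ) - xstar i)) :
    c ⬝ᵥ y ≤ 0 := by
  have hfeasible : xstar + (fun i => (y i : ℝ)) ∈ P := by
    rw [hP] at hxP hzP ⊢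
    obtain ⟨hAx, hx_box⟩ := hxP
    obtain ⟨-, hz_box⟩ := hzP
    refine ⟨?_, fun i => ?_⟩
    · change A.map Int.cast *ᵥ _ = _
      rw [mulVec_add, map_intCast_mulVec_eq_zero hAy, add_zero]
      exact hAx
    · exact Set.uIcc_subset_Icc (hx_box i) (hz_box i)
        (add_mem_uIcc_of_abs_le_of_mul_nonneg (hy1 i) (hy2 i))
  have hgain := hx_opt _ hfeasible
  simp only [Pi.add_apply, mul_add, Finset.sum_add_distrib, add_le_iff_nonpos_right] at hgain
  exact_mod_cast hgain

/-- If `x*` is an optimal solution of the LP relaxation, `z ∈ P ∩ ℤ^n`, and `y` is a cycle of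
`z − x*` (i.e. `Ay = 0`, `|y_i| ≤ |(z − x*)_i|` and `y_i·(z − x*)_i ≥ 0` for all `i`),
then `cᵀy ≤ 0`. -/
theorem cycle_has_nonpositive_weight
    (m n : ℕ)
    (A : Matrix (Fin m) (Fin n) ℤ) (b : Fin m → ℤ) (c : Fin n → ℤ)
    (u : Fin n → ℤ) (hu : ∀ i, 0 ≤ u i)
    (P : Set (Fin n → ℝ))
    (hP : P = {x : Fin n → ℝ |
      (Matrix.mulVec (fun i j => (A i j : ℝ)) x = fun i => (b i : ℝ)) ∧
      ∀ i, 0 ≤ x i ∧ x i ≤ (u i : ℝ)})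
    (xstar : Fin n → ℝ) (hxP : xstar ∈ P)
    (hx_opt : ∀ x ∈ P, ∑ i, (c i : ℝ) * x i ≤ ∑ i, (c i : ℝ) * xstar i)
    (z : Fin n → ℤ) (hzP : (fun i => (z i : ℝ)) ∈ P)
    (y : Fin n → ℤ)
    (hAy : A.mulVec y = 0)
    (hy1 : ∀ i, |(y i : ℝ)| ≤ |(z i : ℝ) - xstar i|)
    (hy2 : ∀ i, 0 ≤ (y i : ℝ) * ((z i : ℝ) - xstar i)) :
    c ⬝ᵥ y ≤ 0 :=
  cycle_has_nonpositive_weight_general m n A b c u P hP xstar hxP hx_opt z hzP y hAy hy1 hy2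
end

section
/- Let A ∈ ℤ^{m×n}, b ∈ ℤ^m, c ∈ ℤ^n, u ∈ ℤ^n_{≥0}, and let P = {x ∈ ℝ^n : Ax = b, 0 ≤ x ≤ u}. Let x* ∈ P satisfy c^T x* ≥ c^T x for all x ∈ P, and let z* ∈ P ∩ ℤ^n be such that c^T z* ≥ c^T z for all z ∈ P ∩ ℤ^n, and such that ‖z* − x*‖_1 is minimal among all such optimal integer points. Then the only cycle of z* − x* is the zero vector. -/
open Matrix Set

/-! Since `y` lies coordinatewise between `0` and `z* − x*`, both `x* + y` and `z* − y` stay in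
the box and still solve `Ax = b`, so they lie in `P`. Optimality of `x*` over `P` gives `c·y ≤ 0`
and optimality of `z*` over the integer points gives `c·y ≥ 0`; hence `z* − y` is again an optimal
integer point. But `‖z* − y − x*‖₁ = ‖z* − x*‖₁ − ‖y‖₁`, so minimality of `z*` forces `y = 0`. -/

lemma mem_uIcc_zero_of_abs_le_of_mul_nonneg {α : Type*} [Ring α] [LinearOrder α]
    [IsStrictOrderedRing α] {y w : α} (hle : |y| ≤ |w|) (hsign : 0 ≤ y * w) : y ∈ uIcc 0 w := by
  rcases mul_nonneg_iff.mp hsign with ⟨hy, hw⟩ | ⟨hy, hw⟩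
  · rw [abs_of_nonneg hy, abs_of_nonneg hw] at hle
    exact mem_uIcc_of_le hy hle
  · rw [abs_of_nonpos hy, abs_of_nonpos hw, neg_le_neg_iff] at hle
    exact mem_uIcc_of_ge hle hy

section OrderedAddGroup

variable {α : Type*} [AddCommGroup α] [LinearOrder α] [IsOrderedAddMonoid α]

lemma abs_sub_eq_abs_sub_abs_of_mem_uIcc_zero {y w : α} (h : y ∈ uIcc 0 w) :
    |w - y| = |w| - |y| := by
  rcases mem_uIcc.mp h with ⟨hy, hyw⟩ | ⟨hwy, hy⟩
  · rw [abs_of_nonneg (sub_nonneg.mpr hyw), abs_of_nonneg hy, abs_of_nonneg (hy.trans hyw)]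
  · rw [abs_of_nonpos (sub_nonpos.mpr hwy), abs_of_nonpos hy, abs_of_nonpos (hwy.trans hy)]
    abel

lemma eq_zero_of_sum_abs_nonpos {ι : Type*} [Fintype ι] {v : ι → α} (h : ∑ i, |v i| ≤ 0) :
    v = 0 := by
  ext i
  exact abs_nonpos_iff.mp <|
    (Finset.single_le_sum (fun j _ => abs_nonneg (v j)) (Finset.mem_univ i)).trans h

lemma sum_abs_sub_eq_of_mem_uIcc_zero {ι : Type*} {s : Finset ι} {w y : ι → α}
    (h : ∀ i ∈ s, y i ∈ uIcc 0 (w i)) :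
    ∑ i ∈ s, |w i - y i| = ∑ i ∈ s, |w i| - ∑ i ∈ s, |y i| := by
  rw [← Finset.sum_sub_distrib]
  exact Finset.sum_congr rfl fun i hi => abs_sub_eq_abs_sub_abs_of_mem_uIcc_zero (h i hi)

lemma add_mem_uIcc_of_mem_uIcc_zero_sub {x z y : α} (h : y ∈ uIcc 0 (z - x)) :
    x + y ∈ uIcc x z := by
  rwa [← mem_preimage, preimage_const_add_uIcc, sub_self]

lemma sub_mem_uIcc_of_mem_uIcc_zero_sub {x z y : α} (h : y ∈ uIcc 0 (z - x)) :
    z - y ∈ uIcc x z := by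
  rwa [← mem_preimage, preimage_const_sub_uIcc, sub_self, uIcc_comm]

end OrderedAddGroup

section BoxPolytope

variable {ι κ α : Type*} [Fintype ι] [Ring α] [LinearOrder α]

def boxPolytope (A : Matrix κ ι α) (b : κ → α) (u : ι → α) : Set (ι → α) :=
  {x | A *ᵥ x = b ∧ ∀ i, 0 ≤ x i ∧ x i ≤ u i}

variable {A : Matrix κ ι α} {b : κ → α} {u : ι → α} {x z d : ι → α}

lemma mem_boxPolytope_of_mem_uIcc {w : ι → α} (hx : x ∈ boxPolytope A b u)
    (hz : z ∈ boxPolytope A b u) (hw : A *ᵥ w = b) (hbtw : ∀ i, w i ∈ uIcc (x i) (z i)) :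
    w ∈ boxPolytope A b u :=
  ⟨hw, fun i => uIcc_subset_Icc (hx.2 i) (hz.2 i) (hbtw i)⟩

variable [IsOrderedRing α]

lemma add_mem_boxPolytope (hx : x ∈ boxPolytope A b u) (hz : z ∈ boxPolytope A b u)
    (hd : A *ᵥ d = 0) (hbtw : ∀ i, d i ∈ uIcc 0 (z i - x i)) : x + d ∈ boxPolytope A b u :=
  mem_boxPolytope_of_mem_uIcc hx hz (by rw [mulVec_add, hx.1, hd, add_zero])
    fun i => add_mem_uIcc_of_mem_uIcc_zero_sub (hbtw i)

lemma sub_mem_boxPolytope (hx : x ∈ boxPolytope A b u) (hz : z ∈ boxPolytope A b u)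
    (hd : A *ᵥ d = 0) (hbtw : ∀ i, d i ∈ uIcc 0 (z i - x i)) : z - d ∈ boxPolytope A b u :=
  mem_boxPolytope_of_mem_uIcc hx hz (by rw [mulVec_sub, hz.1, hd, sub_zero])
    fun i => sub_mem_uIcc_of_mem_uIcc_zero_sub (hbtw i)

end BoxPolytope

lemma Matrix.map_intCast_mulVec {m n R : Type*} [Fintype n] [Ring R] (A : Matrix m n ℤ)
    (y : n → ℤ) : A.map (Int.cast : ℤ → R) *ᵥ (Int.cast ∘ y) = Int.cast ∘ (A *ᵥ y) := by
  ext i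
  exact ((Int.castRingHom R).map_mulVec A y i).symm

theorem minimal_optimum_has_no_cycle_general
    (m n : ℕ)
    (A : Matrix (Fin m) (Fin n) ℤ) (b : Fin m → ℤ) (c : Fin n → ℤ)
    (u : Fin n → ℤ)
    (P : Set (Fin n → ℝ))
    (hP : P = {x : Fin n → ℝ |
      (Matrix.mulVec (fun i j => (A i j : ℝ)) x = fun i => (b i : ℝ)) ∧
      ∀ i, 0 ≤ x i ∧ x i ≤ (u i : ℝ)})
    (xstar : Fin n → ℝ) (hxP : xstar ∈ P)
    (hx_opt : ∀ x ∈ P, ∑ i, (c i : ℝ) * x i ≤ ∑ i, (c i : ℝ) * xstar i)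
    (zstar : Fin n → ℤ) (hzP : (fun i => (zstar i : ℝ)) ∈ P)
    (hz_opt : ∀ z : Fin n → ℤ, (fun i => (z i : ℝ)) ∈ P → c ⬝ᵥ z ≤ c ⬝ᵥ zstar)
    (hz_min : ∀ z : Fin n → ℤ, (fun i => (z i : ℝ)) ∈ P →
      (∀ z' : Fin n → ℤ, (fun i => (z' i : ℝ)) ∈ P → c ⬝ᵥ z' ≤ c ⬝ᵥ z) →
      ∑ i, |(zstar i : ℝ) - xstar i| ≤ ∑ i, |(z i : ℝ) - xstar i|) :
    ∀ y : Fin n → ℤ,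
      A.mulVec y = 0 →
      (∀ i, |(y i : ℝ)| ≤ |(zstar i : ℝ) - xstar i|) →
      (∀ i, 0 ≤ (y i : ℝ) * ((zstar i : ℝ) - xstar i)) →
      y = 0 := by
  intro y hAy hy_le hy_sign
  set Q := boxPolytope (A.map Int.cast) (Int.cast ∘ b) (Int.cast ∘ u : Fin n → ℝ)
  obtain rfl : P = Q := hP
  have hy_btw i : (y i : ℝ) ∈ uIcc 0 ((zstar i : ℝ) - xstar i) :=
    mem_uIcc_zero_of_abs_le_of_mul_nonneg (hy_le i) (hy_sign i)
  have hAy_real : A.map Int.cast *ᵥ (Int.cast ∘ y : Fin n → ℝ) = 0 := by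
    rw [map_intCast_mulVec, hAy, Pi.comp_zero, Int.cast_zero, Function.const_zero]
  have hx_add := add_mem_boxPolytope hxP hzP hAy_real hy_btw
  have hz_sub : (fun i => ((zstar - y) i : ℝ)) ∈ Q := by
    convert sub_mem_boxPolytope hxP hzP hAy_real hy_btw using 1
    ext i
    simp
  have hcy : c ⬝ᵥ y = 0 := by
    refine le_antisymm ?_ ?_
    · have hLP : (Int.cast ∘ c) ⬝ᵥ (xstar + Int.cast ∘ y) ≤ (Int.cast ∘ c) ⬝ᵥ xstar :=
        hx_opt _ hx_add
      rw [dotProduct_add, add_le_iff_nonpos_right] at hLP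
      exact Int.cast_nonpos.mp (((Int.castRingHom ℝ).map_dotProduct c y).trans_le hLP)
    · simpa [dotProduct_sub] using hz_opt _ hz_sub
  have hmin := hz_min _ hz_sub fun z' hz' => by simpa [dotProduct_sub, hcy] using hz_opt z' hz'
  have hy_abs : ∑ i, |(y i : ℝ)| ≤ 0 := by
    simp only [Pi.sub_apply, Int.cast_sub, sub_right_comm _ _ (xstar _)] at hmin
    rw [sum_abs_sub_eq_of_mem_uIcc_zero fun i _ => hy_btw i] at hmin
    linarith
  have hy_zero : (Int.cast ∘ y : Fin n → ℝ) = 0 := eq_zero_of_sum_abs_nonpos hy_abs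
  ext i
  simpa using congrFun hy_zero i

/-- If `x*` is an optimal solution of the LP relaxation and `z*` is an optimal integer solution
minimizing `‖z* − x*‖₁` among all optimal integer solutions, then the only cycle of `z* − x*`
(a `y ∈ ℤ^n` with `Ay = 0`, `|y_i| ≤ |(z* − x*)_i|` and `y_i·(z* − x*)_i ≥ 0` for all `i`)
is the zero vector. -/
theorem minimal_optimum_has_no_cycle
    (m n : ℕ)
    (A : Matrix (Fin m) (Fin n) ℤ) (b : Fin m → ℤ) (c : Fin n → ℤ)
    (u : Fin n → ℤ) (hu : ∀ i, 0 ≤ u i)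
    (P : Set (Fin n → ℝ))
    (hP : P = {x : Fin n → ℝ |
      (Matrix.mulVec (fun i j => (A i j : ℝ)) x = fun i => (b i : ℝ)) ∧
      ∀ i, 0 ≤ x i ∧ x i ≤ (u i : ℝ)})
    (xstar : Fin n → ℝ) (hxP : xstar ∈ P)
    (hx_opt : ∀ x ∈ P, ∑ i, (c i : ℝ) * x i ≤ ∑ i, (c i : ℝ) * xstar i)
    (zstar : Fin n → ℤ) (hzP : (fun i => (zstar i : ℝ)) ∈ P)
    (hz_opt : ∀ z : Fin n → ℤ, (fun i => (z i : ℝ)) ∈ P → c ⬝ᵥ z ≤ c ⬝ᵥ zstar)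
    (hz_min : ∀ z : Fin n → ℤ, (fun i => (z i : ℝ)) ∈ P →
      (∀ z' : Fin n → ℤ, (fun i => (z' i : ℝ)) ∈ P → c ⬝ᵥ z' ≤ c ⬝ᵥ z) →
      ∑ i, |(zstar i : ℝ) - xstar i| ≤ ∑ i, |(z i : ℝ) - xstar i|) :
    ∀ y : Fin n → ℤ,
      A.mulVec y = 0 →
      (∀ i, |(y i : ℝ)| ≤ |(zstar i : ℝ) - xstar i|) →
      (∀ i, 0 ≤ (y i : ℝ) * ((zstar i : ℝ) - xstar i)) →
      y = 0 :=
  minimal_optimum_has_no_cycle_general m n A b c u P hP xstar hxP hx_opt zstar hzP hz_opt hz_min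
end

section
/- Let a ∈ ℤ^n with 1 ≤ a_i ≤ Δ for all i, let β ∈ ℤ_{≥0} and c ∈ ℤ^n, and let P = {x ∈ ℝ^n : a^T x = β, x ≥ 0}. Suppose P contains an integer point, let x* ∈ P satisfy c^T x* ≥ c^T x for all x ∈ P, and let z* ∈ P ∩ ℤ^n satisfy c^T z* ≥ c^T z for all z ∈ P ∩ ℤ^n. Then c^T x* − c^T z* ≤ 2 · ‖c‖_∞ · Δ. -/
/-!
Let `j` be an item of best ratio `c j / a j`. Every LP-feasible `x` has value at most
`β * c j / a j`, and for an integer point `z` this bound exceeds `cᵀz` by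
`(∑ i, z i * δ i) / a j`, where `δ i = c j * a i - c i * a j ∈ [0, 2‖c‖Δ]`. If an optimal `z`
used `a j` or more items with `δ i > 0`, the pigeonhole principle on prefix sums mod `a j` would
give a nonempty subcollection of them of weight divisible by `a j`; trading it for copies of `j`
strictly improves `z`. Hence fewer than `a j` such items are used, and the gap is `≤ 2‖c‖Δ`.
-/

open Finset Matrix

theorem List.exists_sublist_ne_nil_dvd_sum_map {α : Type*} (f : α → ℤ) {d : ℕ} (hd : 0 < d)
    {l : List α} (hl : d ≤ l.length) :
    ∃ l', l'.Sublist l ∧ l' ≠ [] ∧ (d : ℤ) ∣ (l'.map f).sum := by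
  have hmaps : ∀ k ∈ Finset.range (d + 1),
      ((l.take k).map f).sum % d ∈ Finset.Ico (0 : ℤ) d := fun k _ =>
    Finset.mem_Ico.2 ⟨Int.emod_nonneg _ (by omega), Int.emod_lt_of_pos _ (by omega)⟩
  have hcard : #(Finset.Ico (0 : ℤ) d) < #(Finset.range (d + 1)) := by simp
  obtain ⟨k, hk, m, hm, hkm, heq⟩ := exists_ne_map_eq_of_card_lt_of_maps_to hcard hmaps
  wlog hlt : k < m generalizing k m
  · exact this m hm k hk hkm.symm heq.symm (by omega)
  rw [Finset.mem_range] at hk hm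
  refine ⟨(l.drop k).take (m - k), (take_sublist _ _).trans (drop_sublist _ _), ?_, ?_⟩
  · rw [← List.length_pos_iff]
    simp only [List.length_take, List.length_drop]
    omega
  · have hsplit : l.take m = l.take k ++ (l.drop k).take (m - k) := by
      rw [← List.take_add]
      congr
      omega
    rw [hsplit, List.map_append, List.sum_append] at heq
    simpa using Int.ModEq.dvd heq

theorem exists_dvd_dotProduct_of_le_sum {ι : Type*} [Fintype ι] [DecidableEq ι] (a : ι → ℤ)
    {d : ℤ} (hd : 0 < d) {w : ι → ℤ} (hw : 0 ≤ w) (h : d ≤ ∑ i, w i) :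
    ∃ t, 0 ≤ t ∧ t ≤ w ∧ t ≠ 0 ∧ d ∣ a ⬝ᵥ t := by
  lift d to ℕ using hd.le
  lift w to ι → ℕ using hw
  obtain ⟨l, hl⟩ : ∃ l : List ι, (l : Multiset ι) = ∑ i, w i • {i} := Quotient.exists_rep _
  have hcount : ∀ i, l.count i = w i := fun i => by
    rw [← Multiset.coe_count, hl, Multiset.count_sum']
    simp [Multiset.count_singleton]
  have hlen : l.length = ∑ i, w i := by
    rw [← Multiset.coe_card, hl, Multiset.card_sum]
    simp
  simp only at h
  obtain ⟨l', hsub, hne, hdvd⟩ :=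
    l.exists_sublist_ne_nil_dvd_sum_map a (by exact_mod_cast hd) (by rw [hlen]; exact_mod_cast h)
  refine ⟨fun i => l'.count i, fun i => by positivity, fun i => ?_, ?_, ?_⟩
  · exact Int.ofNat_le.2 ((hsub.count_le i).trans (hcount i).le)
  · obtain ⟨x, hx⟩ := List.exists_mem_of_ne_nil l' hne
    exact Function.ne_iff.2 ⟨x, by simpa [List.count_eq_zero] using hx⟩
  · rw [Finset.sum_list_map_count, Finset.sum_subset (Finset.subset_univ _)] at hdvd
    · simpa [dotProduct, mul_comm] using hdvd
    · intro i _ hi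
      simp [List.count_eq_zero_of_not_mem (by simpa using hi)]

section ReducedCost
variable {ι R : Type*}

/-- `a j` times the reduced cost `c j / a j * a i - c i` of item `i` with respect to item `j`:
the value lost by one copy of `i` against spending its weight on `j`. -/
def reducedCost [CommRing R] (a c : ι → R) (j i : ι) : R := c j * a i - c i * a j

theorem mul_dotProduct_sub_mul_dotProduct [Fintype ι] [CommRing R] (a c v : ι → R) (j : ι) :
    c j * (a ⬝ᵥ v) - a j * (c ⬝ᵥ v) = ∑ i, v i * reducedCost a c j i := by
  simp only [dotProduct, reducedCost, mul_sum, ← sum_sub_distrib]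
  exact sum_congr rfl fun i _ => by ring

theorem mul_dotProduct_le_mul_dotProduct [Fintype ι] [CommRing R] [PartialOrder R]
    [IsOrderedRing R] {a c x : ι → R} {j : ι} (hj : ∀ i, 0 ≤ reducedCost a c j i) (hx : 0 ≤ x) :
    a j * (c ⬝ᵥ x) ≤ c j * (a ⬝ᵥ x) := by
  rw [← sub_nonneg, mul_dotProduct_sub_mul_dotProduct]
  exact sum_nonneg fun i _ => mul_nonneg (hx i) (hj i)

theorem reducedCost_le [CommRing R] [LinearOrder R] [IsStrictOrderedRing R] {a c : ι → R}
    {M Δ : R} (hc : ∀ i, |c i| ≤ M) (ha : ∀ i, 0 ≤ a i) (haΔ : ∀ i, a i ≤ Δ) (j i : ι) :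
    reducedCost a c j i ≤ 2 * M * Δ := by
  have hM : 0 ≤ M := (abs_nonneg _).trans (hc i)
  calc c j * a i - c i * a j ≤ |c j| * a i + |c i| * a j := by
        have := mul_le_mul_of_nonneg_right (le_abs_self (c j)) (ha i)
        have := mul_le_mul_of_nonneg_right (neg_abs_le (c i)) (ha j)
        linarith
    _ ≤ M * Δ + M * Δ := by gcongr <;> simp_all
    _ = 2 * M * Δ := by ring

theorem exists_forall_reducedCost_nonneg [Finite ι] [Nonempty ι] {a : ι → ℤ} (c : ι → ℤ)
    (ha : ∀ i, 0 < a i) : ∃ j, ∀ i, 0 ≤ reducedCost a c j i := by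
  obtain ⟨j, hj⟩ := Finite.exists_max fun i => (c i : ℚ) / a i
  refine ⟨j, fun i => ?_⟩
  have := hj i
  rw [div_le_div_iff₀ (by exact_mod_cast ha i) (by exact_mod_cast ha j)] at this
  rw [reducedCost, sub_nonneg]
  exact_mod_cast this

end ReducedCost

section IntegerOptimum
variable {ι : Type*} [Fintype ι] [DecidableEq ι] {a c z : ι → ℤ} {j : ι}
  (ha : ∀ i, 0 < a i)
  (hopt : ∀ z', 0 ≤ z' → a ⬝ᵥ z' = a ⬝ᵥ z → c ⬝ᵥ z' ≤ c ⬝ᵥ z)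
include ha hopt

theorem mul_dotProduct_le_of_dvd {t : ι → ℤ} (ht : 0 ≤ t) (htz : t ≤ z)
    (hdvd : a j ∣ a ⬝ᵥ t) : c j * (a ⬝ᵥ t) ≤ a j * (c ⬝ᵥ t) := by
  obtain ⟨k, hk⟩ := hdvd
  have hk0 : 0 ≤ k := by
    have : 0 ≤ a ⬝ᵥ t := sum_nonneg fun i _ => mul_nonneg (ha i).le (ht i)
    nlinarith [ha j]
  -- trade the items `t` of `z` for `k` copies of item `j`
  have hle := hopt (z - t + Pi.single j k)
    (fun i => by
      have : t i ≤ z i := htz i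
      simp only [Pi.add_apply, Pi.sub_apply, Pi.single_apply, Pi.zero_apply]
      split_ifs <;> omega)
    (by simp [dotProduct_add, dotProduct_sub, dotProduct_single, hk])
  simp only [dotProduct_add, dotProduct_sub, dotProduct_single] at hle
  rw [hk]
  nlinarith [ha j]

theorem sum_filter_reducedCost_pos_lt (hz : 0 ≤ z) (hj : ∀ i, 0 ≤ reducedCost a c j i) :
    ∑ i with 0 < reducedCost a c j i, z i < a j := by
  by_contra! h
  set I := ({i | 0 < reducedCost a c j i} : Finset ι)
  obtain ⟨t, ht0, htw, ht_ne, hdvd⟩ := exists_dvd_dotProduct_of_le_sum a (ha j)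
    (w := fun i => if i ∈ I then z i else 0)
    (fun i => by dsimp only; split_ifs; exacts [hz i, le_rfl])
    (by rwa [sum_ite_mem, univ_inter])
  have htz : t ≤ z := fun i => (htw i).trans (by dsimp only; split_ifs; exacts [le_rfl, hz i])
  obtain ⟨i, hi⟩ := Function.ne_iff.1 ht_ne
  have hiI : i ∈ I := by
    by_contra hiI
    have := htw i
    simp only [hiI, if_false] at this
    exact hi (le_antisymm this (ht0 i))
  have hpos : 0 < ∑ i, t i * reducedCost a c j i :=
    sum_pos' (fun i _ => mul_nonneg (ht0 i) (hj i))
      ⟨i, mem_univ _, mul_pos ((ht0 i).lt_of_ne' hi) (mem_filter.1 hiI).2⟩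
  rw [← mul_dotProduct_sub_mul_dotProduct] at hpos
  linarith [mul_dotProduct_le_of_dvd ha hopt ht0 htz hdvd]

theorem mul_dotProduct_le_mul_dotProduct_add (hz : 0 ≤ z)
    (hj : ∀ i, 0 ≤ reducedCost a c j i) {K : ℤ} (hK : ∀ i, reducedCost a c j i ≤ K) :
    c j * (a ⬝ᵥ z) ≤ a j * (c ⬝ᵥ z + K) := by
  have hcount := sum_filter_reducedCost_pos_lt ha hopt hz hj
  have hK0 : 0 ≤ K := (hj j).trans (hK j)
  calc c j * (a ⬝ᵥ z) = a j * (c ⬝ᵥ z) + ∑ i, z i * reducedCost a c j i := by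
        linarith [mul_dotProduct_sub_mul_dotProduct a c z j]
    _ = a j * (c ⬝ᵥ z) + ∑ i with 0 < reducedCost a c j i, z i * reducedCost a c j i := by
        rw [sum_filter_of_ne fun i _ h => (hj i).lt_of_ne' (right_ne_zero_of_mul h)]
    _ ≤ a j * (c ⬝ᵥ z) + (∑ i with 0 < reducedCost a c j i, z i) * K := by
        rw [sum_mul]
        gcongr with i
        exacts [hz i, hK i]
    _ ≤ a j * (c ⬝ᵥ z + K) := by nlinarith

end IntegerOptimum

theorem knapsack_integrality_gap_general
    (n : ℕ) (Δ : ℤ)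
    (a : Fin n → ℤ) (ha : ∀ i, 1 ≤ a i ∧ a i ≤ Δ)
    (β : ℤ) (c : Fin n → ℤ)
    (P : Set (Fin n → ℝ))
    (hP : P = {x : Fin n → ℝ | (∑ i, (a i : ℝ) * x i) = (β : ℝ) ∧ ∀ i, 0 ≤ x i})
    (xstar : Fin n → ℝ) (hxP : xstar ∈ P)
    (zstar : Fin n → ℤ) (hzP : (fun i => (zstar i : ℝ)) ∈ P)
    (hz_opt : ∀ z : Fin n → ℤ, (fun i => (z i : ℝ)) ∈ P → c ⬝ᵥ z ≤ c ⬝ᵥ zstar) :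
    (∑ i, (c i : ℝ) * xstar i) - ∑ i, (c i : ℝ) * (zstar i : ℝ) ≤
      2 * ‖(fun i : Fin n => (c i : ℝ))‖ * (Δ : ℝ) := by
  rcases isEmpty_or_nonempty (Fin n) with hn | hn
  · simp [Subsingleton.elim (fun i : Fin n => (c i : ℝ)) 0]
  have ha_pos : ∀ i, 0 < a i := fun i => (ha i).1
  obtain ⟨j, hj⟩ := exists_forall_reducedCost_nonneg c ha_pos
  subst hP
  simp only [Set.mem_ofPred_eq] at hxP hzP hz_opt
  obtain ⟨hx_eq, hx_nonneg⟩ := hxP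
  obtain ⟨hz_eq, hz_nonneg⟩ := hzP
  have hzβ : a ⬝ᵥ zstar = β := by exact_mod_cast hz_eq
  have hopt : ∀ z, 0 ≤ z → a ⬝ᵥ z = a ⬝ᵥ zstar → c ⬝ᵥ z ≤ c ⬝ᵥ zstar := fun z hz hz_eq =>
    hz_opt z ⟨by exact_mod_cast hz_eq.trans hzβ, fun i => Int.cast_nonneg (hz i)⟩
  set B := 2 * ‖(fun i : Fin n => (c i : ℝ))‖ * (Δ : ℝ)
  have hK : ∀ i, reducedCost a c j i ≤ ⌊B⌋ := fun i => Int.le_floor.2 <| by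
    have := reducedCost_le (a := fun i => (a i : ℝ)) (c := fun i => (c i : ℝ)) (Δ := Δ)
      (fun i => by simpa using norm_le_pi_norm (fun i => (c i : ℝ)) i)
      (fun i => Int.cast_nonneg (ha_pos i).le) (fun i => Int.cast_le.2 (ha i).2) j i
    push_cast [reducedCost] at this ⊢
    exact this
  have hgap : (c j : ℝ) * β ≤ a j * (∑ i, (c i : ℝ) * zstar i + ⌊B⌋) := by
    have := mul_dotProduct_le_mul_dotProduct_add ha_pos hopt
      (fun i => Int.cast_nonneg_iff.1 (hz_nonneg i)) hj hK
    rw [hzβ] at this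
    exact_mod_cast this
  have hLP : (a j : ℝ) * ∑ i, (c i : ℝ) * xstar i ≤ c j * β := by
    have := mul_dotProduct_le_mul_dotProduct (j := j) (a := fun i => (a i : ℝ))
      (c := fun i => (c i : ℝ))
      (fun i => by simpa [reducedCost] using Int.cast_nonneg (R := ℝ) (hj i)) hx_nonneg
    simp only [dotProduct] at this
    rwa [hx_eq] at this
  have ha_j : (0 : ℝ) < a j := Int.cast_pos.2 (ha_pos j)
  refine le_of_mul_le_mul_left ?_ ha_j
  linarith [mul_le_mul_of_nonneg_left (Int.floor_le B) ha_j.le]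

/-- **Integrality gap for the unbounded knapsack problem** (the case `m = 1`):
if `1 ≤ a_i ≤ Δ` for all `i`, `P = {x : aᵀx = β, x ≥ 0}` contains an integer point,
`x*` is LP-optimal and `z*` is an optimal integer point, then
`cᵀx* − cᵀz* ≤ 2·‖c‖_∞·Δ`, the norm on `Fin n → ℝ` being the maximum norm. -/
theorem knapsack_integrality_gap
    (n : ℕ) (Δ : ℤ) (hΔ : 1 ≤ Δ)
    (a : Fin n → ℤ) (ha : ∀ i, 1 ≤ a i ∧ a i ≤ Δ)
    (β : ℤ) (hβ : 0 ≤ β) (c : Fin n → ℤ)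
    (P : Set (Fin n → ℝ))
    (hP : P = {x : Fin n → ℝ | (∑ i, (a i : ℝ) * x i) = (β : ℝ) ∧ ∀ i, 0 ≤ x i})
    (hint : ∃ z : Fin n → ℤ, (fun i => (z i : ℝ)) ∈ P)
    (xstar : Fin n → ℝ) (hxP : xstar ∈ P)
    (hx_opt : ∀ x ∈ P, ∑ i, (c i : ℝ) * x i ≤ ∑ i, (c i : ℝ) * xstar i)
    (zstar : Fin n → ℤ) (hzP : (fun i => (zstar i : ℝ)) ∈ P)
    (hz_opt : ∀ z : Fin n → ℤ, (fun i => (z i : ℝ)) ∈ P → c ⬝ᵥ z ≤ c ⬝ᵥ zstar) :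
    (∑ i, (c i : ℝ) * xstar i) - ∑ i, (c i : ℝ) * (zstar i : ℝ) ≤
      2 * ‖(fun i : Fin n => (c i : ℝ))‖ * (Δ : ℝ) :=
  knapsack_integrality_gap_general n Δ a ha β c P hP xstar hxP zstar hzP hz_opt
end
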